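/- arXiv:2212.06693 — 3 statements merged into one kernel-verified Lean document; each statement's English description precedes it below -/
import Mathlib

section
/- Deterministic ℓ₂-error bound for the fusion lasso under a restricted-eigenvalue condition: Let X ∈ ℝ^{N×p}, ỹ ∈ ℝ^N, λ > 0, β* ∈ ℝ^p, and S ⊆ {1,…,p}. Let β̂ minimize F(β) = (1/(2N))‖ỹ − Xβ‖₂² + λ‖β‖₁ over ℝ^p, set û = β̂ − β* and Σ̂ = X^⊤X/N, and assume ‖(1/N) X^⊤(ỹ − Xβ*)‖∞ ≤ λ/2. Suppose in addition that there are κ > 0 and φ ≥ 0 such that u^⊤ Σ̂ u ≥ κ‖u‖₂² − φ‖u‖₁² for all u ∈ ℝ^p, and that 98 φ |S| ≤ κ. Then ‖û‖₂² ≤ max{ 144 λ² |S| / κ², (6 λ ‖β*_{S^c}‖₁ + 49 φ ‖β*_{S^c}‖₁²) / κ }. -/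
/-!
Write `u = β̂ - β*`, `x = ‖u_S‖₁`, `w = ‖u_{Sᶜ}‖₁`, `b = ‖β*_{Sᶜ}‖₁` and `Q = uᵀΣ̂u`. Comparing the
lasso objective at `β̂` and at `β*`, and bounding the cross term by `λ/2 ‖u‖₁`, gives the basic
inequality `0 ≤ Q ≤ 3λx - λw + 4λb`. Together with the restricted-eigenvalue bound
`κ‖u‖₂² - φ(x + w)² ≤ Q` and Cauchy–Schwarz `x² ≤ |S| ‖u‖₂²`, the claim becomes an inequality
between real numbers. If `φ(2x + w) ≤ λ`, the `w`-terms cancel and either `b` dominates `x`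
(second branch of the maximum) or `κ‖u‖₂² ≲ λx ≤ λ√(|S|)‖u‖₂` (first branch); otherwise `w ≤ 3x + 4b`
and `κ‖u‖₂² ≤ 16φ(x + b)²`, where the condition `98φ|S| ≤ κ` absorbs the `x²` term.
-/

open Matrix Finset

noncomputable section

def l1 {ι : Type*} [Fintype ι] (v : ι → ℝ) : ℝ := ∑ j, |v j|
def l2sq {ι : Type*} [Fintype ι] (v : ι → ℝ) : ℝ := ∑ j, (v j) ^ 2
def linf {ι : Type*} [Fintype ι] (v : ι → ℝ) : ℝ := ⨆ j, |v j|
def restr {p : ℕ} (S : Finset (Fin p)) (v : Fin p → ℝ) : Fin p → ℝ :=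
  fun j => if j ∈ S then v j else 0

lemma l1_nonneg {ι : Type*} [Fintype ι] (v : ι → ℝ) : 0 ≤ l1 v :=
  sum_nonneg fun _ _ => abs_nonneg _

lemma l2sq_nonneg {ι : Type*} [Fintype ι] (v : ι → ℝ) : 0 ≤ l2sq v :=
  sum_nonneg fun _ _ => sq_nonneg _

lemma l2sq_sub {ι : Type*} [Fintype ι] (a b : ι → ℝ) :
    l2sq (a - b) = l2sq a - 2 * (a ⬝ᵥ b) + l2sq b := by
  simp only [l2sq, dotProduct, Pi.sub_apply, mul_sum, ← sum_sub_distrib, ← sum_add_distrib]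
  exact sum_congr rfl fun _ _ => by ring

lemma dotProduct_le_linf_mul_l1 {ι : Type*} [Fintype ι] (v u : ι → ℝ) :
    v ⬝ᵥ u ≤ linf v * l1 u := by
  rw [l1, mul_sum]
  refine sum_le_sum fun j _ => ?_
  calc v j * u j ≤ |v j| * |u j| := by rw [← abs_mul]; exact le_abs_self _
    _ ≤ linf v * |u j| := by
      gcongr
      exact le_ciSup (f := fun j => |v j|) (Set.finite_range _).bddAbove j

lemma l1_restr {p : ℕ} (S : Finset (Fin p)) (v : Fin p → ℝ) :
    l1 (restr S v) = ∑ j ∈ S, |v j| := by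
  simp only [l1, restr, apply_ite abs, abs_zero, sum_ite_mem, univ_inter]

lemma l1_restr_add_l1_restr_compl {p : ℕ} (S : Finset (Fin p)) (v : Fin p → ℝ) :
    l1 (restr S v) + l1 (restr Sᶜ v) = l1 v := by
  rw [l1_restr, l1_restr, l1, sum_add_sum_compl]

lemma sq_l1_restr_le_card_mul_l2sq {p : ℕ} (S : Finset (Fin p)) (v : Fin p → ℝ) :
    l1 (restr S v) ^ 2 ≤ #S * l2sq v := by
  calc l1 (restr S v) ^ 2 = (∑ j ∈ S, 1 * |v j|) ^ 2 := by simp only [l1_restr, one_mul]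
    _ ≤ (∑ _j ∈ S, (1 : ℝ) ^ 2) * ∑ j ∈ S, |v j| ^ 2 := sum_mul_sq_le_sq_mul_sq _ _ _
    _ = #S * ∑ j ∈ S, v j ^ 2 := by simp
    _ ≤ #S * l2sq v := by
      gcongr
      exact sum_le_sum_of_subset_of_nonneg (subset_univ S) fun _ _ _ => sq_nonneg _

lemma dotProduct_smul_gram_mulVec {m ι : Type*} [Fintype m] [Fintype ι]
    (A : Matrix m ι ℝ) (c : ℝ) (u : ι → ℝ) :
    u ⬝ᵥ ((c • (Aᵀ * A)) *ᵥ u) = c * l2sq (A *ᵥ u) := by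
  rw [smul_mulVec, dotProduct_smul, ← mulVec_mulVec, dotProduct_mulVec, vecMul_transpose]
  simp [l2sq, dotProduct, sq]

lemma l1_sub_l1_le {p : ℕ} (S : Finset (Fin p)) (β β' : Fin p → ℝ) :
    l1 β - l1 β' ≤
      l1 (restr S (β' - β)) + 2 * l1 (restr Sᶜ β) - l1 (restr Sᶜ (β' - β)) := by
  rw [← l1_restr_add_l1_restr_compl S β, ← l1_restr_add_l1_restr_compl S β']
  simp only [l1_restr, Pi.sub_apply]
  have hS : ∑ j ∈ S, (|β j| - |β' j|) ≤ ∑ j ∈ S, |β' j - β j| :=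
    sum_le_sum fun j _ => by rw [abs_sub_comm]; exact abs_sub_abs_le_abs_sub _ _
  have hSc : ∑ j ∈ Sᶜ, (|β j| - |β' j|) ≤ ∑ j ∈ Sᶜ, (2 * |β j| - |β' j - β j|) :=
    sum_le_sum fun j _ => by linarith [abs_sub (β' j) (β j)]
  rw [sum_sub_distrib] at hS
  rw [sum_sub_distrib, sum_sub_distrib, ← mul_sum] at hSc
  linarith

def lassoObjective {N : ℕ} {ι : Type*} [Fintype ι] (X : Matrix (Fin N) ι ℝ) (y : Fin N → ℝ)
    (lam : ℝ) (β : ι → ℝ) : ℝ :=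
  (1 / (2 * (N : ℝ))) * l2sq (y - X *ᵥ β) + lam * l1 β

lemma lasso_basic_inequality {N : ℕ} {ι : Type*} [Fintype ι] (X : Matrix (Fin N) ι ℝ)
    (y : Fin N → ℝ) (lam : ℝ) (βstar βhat : ι → ℝ)
    (hmin : lassoObjective X y lam βhat ≤ lassoObjective X y lam βstar)
    (hE1 : linf ((N : ℝ)⁻¹ • (Xᵀ *ᵥ (y - X *ᵥ βstar))) ≤ lam / 2) :
    (βhat - βstar) ⬝ᵥ (((N : ℝ)⁻¹ • (Xᵀ * X)) *ᵥ (βhat - βstar)) ≤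
      lam * l1 (βhat - βstar) + 2 * lam * (l1 βstar - l1 βhat) := by
  set u := βhat - βstar
  set r := y - X *ᵥ βstar
  have hresid : y - X *ᵥ βhat = r - X *ᵥ u := by
    simp only [r, u, mulVec_sub]; abel
  have hcross : (N : ℝ)⁻¹ * (r ⬝ᵥ (X *ᵥ u)) ≤ lam / 2 * l1 u := by
    rw [dotProduct_mulVec, ← mulVec_transpose, ← smul_eq_mul, ← smul_dotProduct]
    exact (dotProduct_le_linf_mul_l1 _ _).trans (by gcongr; exact l1_nonneg u)
  -- also for `N = 0`, where both sides are `0` in Lean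
  have hcoef : (1 : ℝ) / (2 * (N : ℝ)) = (N : ℝ)⁻¹ / 2 := by ring
  unfold lassoObjective at hmin
  rw [hresid, l2sq_sub, hcoef] at hmin
  rw [dotProduct_smul_gram_mulVec]
  linarith

lemma sq_mul_le_of_mul_le_of_sq_le {κ a s T x : ℝ} (hκ : 0 ≤ κ) (hs : 0 ≤ s) (hT : 0 ≤ T)
    (h : κ * T ≤ a * x) (hx : x ^ 2 ≤ s * T) : κ ^ 2 * T ≤ a ^ 2 * s := by
  rcases hT.eq_or_lt with rfl | hT
  · rw [mul_zero]; positivity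
  refine le_of_mul_le_mul_right ?_ hT
  calc κ ^ 2 * T * T = (κ * T) ^ 2 := by ring
    _ ≤ (a * x) ^ 2 := pow_le_pow_left₀ (by positivity) h 2
    _ = a ^ 2 * x ^ 2 := by ring
    _ ≤ a ^ 2 * s * T := by rw [mul_assoc]; gcongr

lemma le_max_of_basic_inequality {lam κ φ s T x w b Q : ℝ} (hlam : 0 < lam) (hκ : 0 < κ)
    (hφ : 0 ≤ φ) (hs : 0 ≤ s) (hT : 0 ≤ T) (hx : 0 ≤ x) (hw : 0 ≤ w) (hb : 0 ≤ b)
    (hsparse : 98 * φ * s ≤ κ) (hQ : 0 ≤ Q) (hbasic : Q ≤ 3 * lam * x - lam * w + 4 * lam * b)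
    (hRE : κ * T - φ * (x + w) ^ 2 ≤ Q) (hCS : x ^ 2 ≤ s * T) :
    T ≤ max (144 * lam ^ 2 * s / κ ^ 2) ((6 * lam * b + 49 * φ * b ^ 2) / κ) := by
  have hφx : φ * x ^ 2 ≤ κ * T / 98 := by
    nlinarith [mul_le_mul_of_nonneg_left hCS hφ, mul_le_mul_of_nonneg_right hsparse hT]
  by_cases hc : φ * (2 * x + w) ≤ lam
  · have hA : κ * T ≤ φ * x ^ 2 + 3 * lam * x + 4 * lam * b := by
      nlinarith [mul_le_mul_of_nonneg_left hc hw]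
    by_cases hxb : 3 * x ≤ 2 * b
    · refine le_max_of_le_right ((le_div_iff₀ hκ).2 ?_)
      have hx2 : x ^ 2 ≤ 49 * b ^ 2 := by nlinarith
      nlinarith [mul_le_mul_of_nonneg_left hx2 hφ, mul_le_mul_of_nonneg_left hxb hlam.le]
    · refine le_max_of_le_left ((le_div_iff₀ (by positivity)).2 ?_)
      -- `κT ≤ κT/98 + 9λx`
      have hlin : κ * T ≤ 882 / 97 * lam * x := by
        nlinarith [mul_le_mul_of_nonneg_left (not_le.1 hxb).le hlam.le]
      have := sq_mul_le_of_mul_le_of_sq_le hκ.le hs hT hlin hCS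
      nlinarith [mul_nonneg (sq_nonneg lam) hs]
  · refine le_max_of_le_right ((le_div_iff₀ hκ).2 ?_)
    have hw' : w ≤ 3 * x + 4 * b := le_of_mul_le_mul_left (by linarith) hlam
    have hB : κ * T ≤ 16 * φ * (x + b) ^ 2 := by
      nlinarith [mul_le_mul_of_nonneg_left (not_le.1 hc).le (sub_nonneg.2 hw'),
        mul_nonneg (mul_nonneg hφ (sub_nonneg.2 hw')) (by linarith : (0 : ℝ) ≤ 3 * x + 4 * b)]
    nlinarith [mul_nonneg hφ (sq_nonneg (x - b)), mul_nonneg hlam.le hb, mul_nonneg hφ (sq_nonneg b)]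

theorem fusion_lasso_l2_error_bound_RE
    {N p : ℕ} (X : Matrix (Fin N) (Fin p) ℝ) (ytil : Fin N → ℝ)
    (lam : ℝ) (hlam : 0 < lam)
    (βstar βhat : Fin p → ℝ) (S : Finset (Fin p))
    (hmin : ∀ β : Fin p → ℝ,
      (1 / (2 * (N : ℝ))) * l2sq (ytil - X *ᵥ βhat) + lam * l1 βhat ≤
      (1 / (2 * (N : ℝ))) * l2sq (ytil - X *ᵥ β) + lam * l1 β)
    (hE1 : linf ((N : ℝ)⁻¹ • (Xᵀ *ᵥ (ytil - X *ᵥ βstar))) ≤ lam / 2)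
    (κ φ : ℝ) (hκ : 0 < κ) (hφ : 0 ≤ φ)
    (hRE : ∀ u : Fin p → ℝ,
      κ * l2sq u - φ * (l1 u) ^ 2 ≤ u ⬝ᵥ (((N : ℝ)⁻¹ • (Xᵀ * X)) *ᵥ u))
    (hsparse : 98 * φ * (S.card : ℝ) ≤ κ) :
    l2sq (βhat - βstar) ≤
      max (144 * lam ^ 2 * (S.card : ℝ) / κ ^ 2)
        ((6 * lam * l1 (restr Sᶜ βstar) + 49 * φ * (l1 (restr Sᶜ βstar)) ^ 2) / κ) := by
  have hcone := mul_le_mul_of_nonneg_left (l1_sub_l1_le S βstar βhat) (by positivity : 0 ≤ 2 * lam)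
  have hlasso := lasso_basic_inequality X ytil lam βstar βhat (hmin βstar) hE1
  set u := βhat - βstar
  have hQ : 0 ≤ u ⬝ᵥ (((N : ℝ)⁻¹ • (Xᵀ * X)) *ᵥ u) := by
    rw [dotProduct_smul_gram_mulVec]
    exact mul_nonneg (by positivity) (l2sq_nonneg _)
  have hsplit : l1 (restr S u) + l1 (restr Sᶜ u) = l1 u := l1_restr_add_l1_restr_compl S u
  have hbasic : u ⬝ᵥ (((N : ℝ)⁻¹ • (Xᵀ * X)) *ᵥ u) ≤
      3 * lam * l1 (restr S u) - lam * l1 (restr Sᶜ u) + 4 * lam * l1 (restr Sᶜ βstar) := by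
    rw [← hsplit] at hlasso
    linarith
  have hRE' := hRE u
  rw [← hsplit] at hRE'
  exact le_max_of_basic_inequality hlam hκ hφ (Nat.cast_nonneg _) (l2sq_nonneg _) (l1_nonneg _)
    (l1_nonneg _) (l1_nonneg _) hsparse hQ hbasic hRE' (sq_l1_restr_le_card_mul_l2sq S u)

end
end

section
/- Debiasing step, large-fusion-error case: Under the hypotheses of the debiasing-step basic inequality (δ̂ minimizes G(δ) = (1/(2n))‖ỹ − X(β̄ − δ)‖₂² + λ₂‖δ‖₁, v̂ = δ̂ − δ*, û = β̄ − (β^{(0)} + δ*), Σ̂ = X^⊤X/n, and ‖(1/n)X^⊤(ỹ − Xβ^{(0)})‖∞ ≤ λ₂/2), if additionally û^⊤ Σ̂ û ≥ λ₂‖δ*‖₁, then (1/4) v̂^⊤ Σ̂ v̂ ≤ 3 û^⊤ Σ̂ û − (λ₂/2)‖v̂‖₁, and in particular ‖v̂‖₁ ≤ (6/λ₂) û^⊤ Σ̂ û and (1/4) v̂^⊤ Σ̂ v̂ ≤ 3 û^⊤ Σ̂ û. -/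
/-!
STATEMENT 8: Debiasing step, large-fusion-error case.

Under the hypotheses of the debiasing-step basic inequality (minimizer `δhat`
of `G`, `v̂ = δhat − δstar`, `û = βbar − (β0 + δstar)`, `Σ̂ = XᵀX/n`, event
`E₂ : ‖(1/n)Xᵀ(ytil − Xβ0)‖∞ ≤ λ₂/2`), if additionally `ûᵀΣ̂û ≥ λ₂‖δ*‖₁`,
then `(1/4) v̂ᵀΣ̂v̂ ≤ 3 ûᵀΣ̂û − (λ₂/2)‖v̂‖₁`, and in particular
`‖v̂‖₁ ≤ (6/λ₂) ûᵀΣ̂û` and `(1/4) v̂ᵀΣ̂v̂ ≤ 3 ûᵀΣ̂û`.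
-/

open Matrix Finset

noncomputable section

section Helpers
variable {q : ℕ}

lemma my_l1_nonneg (v : Fin q → ℝ) : 0 ≤ l1 v :=
  Finset.sum_nonneg fun _ _ => abs_nonneg _

lemma my_l1_rev (a b : Fin q → ℝ) : l1 a ≤ l1 b + l1 (b - a) := by
  rw [l1, l1, l1, ← Finset.sum_add_distrib]
  refine Finset.sum_le_sum fun j _ => ?_
  have : a j = b j - (b j - a j) := by ring
  calc |a j| = |b j - (b j - a j)| := by rw [← this]
    _ ≤ |b j| + |b j - a j| := abs_sub _ _
    _ = |b j| + |(b - a) j| := rfl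

lemma my_holder (w v : Fin q → ℝ) : |w ⬝ᵥ v| ≤ linf w * l1 v := by
  have hb : ∀ j, |w j| ≤ linf w := fun j => by
    rw [linf]
    exact le_ciSup (Set.Finite.bddAbove (Set.finite_range fun j => |w j|)) j
  calc |w ⬝ᵥ v| ≤ ∑ j, |w j * v j| := Finset.abs_sum_le_sum_abs _ _
    _ ≤ ∑ j, linf w * |v j| := Finset.sum_le_sum fun j _ => by
        rw [abs_mul]; exact mul_le_mul_of_nonneg_right (hb j) (abs_nonneg _)
    _ = linf w * l1 v := by rw [l1, Finset.mul_sum]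

lemma my_l2sq_eq (v : Fin q → ℝ) : l2sq v = v ⬝ᵥ v := by
  simp [l2sq, dotProduct, sq]

lemma my_l2sq_add (a b : Fin q → ℝ) :
    l2sq (a + b) = l2sq a + 2 * (a ⬝ᵥ b) + l2sq b := by
  simp only [l2sq, dotProduct, Pi.add_apply, Finset.mul_sum,
    ← Finset.sum_add_distrib]
  exact Finset.sum_congr rfl fun j _ => by ring

lemma my_dot_self_nonneg (v : Fin q → ℝ) : 0 ≤ v ⬝ᵥ v :=
  Finset.sum_nonneg fun j _ => mul_self_nonneg _

lemma my_cs (z y : Fin q → ℝ) : z ⬝ᵥ y ≤ z ⬝ᵥ z + (1/4) * (y ⬝ᵥ y) := by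
  have h0 : (0:ℝ) ≤ ∑ j, (z j - y j / 2)^2 :=
    Finset.sum_nonneg fun j _ => sq_nonneg _
  have he : ∑ j, (z j - y j / 2)^2
      = z ⬝ᵥ z - z ⬝ᵥ y + (1/4) * (y ⬝ᵥ y) := by
    simp only [dotProduct, Finset.mul_sum, ← Finset.sum_sub_distrib,
      ← Finset.sum_add_distrib]
    exact Finset.sum_congr rfl fun j _ => by ring
  linarith [he ▸ h0]

end Helpers

lemma my_quad {n p : ℕ} (X : Matrix (Fin n) (Fin p) ℝ) (c : ℝ) (a b : Fin p → ℝ) :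
    a ⬝ᵥ ((c • (Xᵀ * X)) *ᵥ b) = c * ((X *ᵥ a) ⬝ᵥ (X *ᵥ b)) := by
  rw [Matrix.smul_mulVec, dotProduct_smul, ← Matrix.mulVec_mulVec,
    Matrix.dotProduct_mulVec]
  rw [show a ᵥ* Xᵀ = X *ᵥ a from Matrix.vecMul_transpose X a, smul_eq_mul]

lemma my_dot_tr {n p : ℕ} (X : Matrix (Fin n) (Fin p) ℝ) (r : Fin n → ℝ) (v : Fin p → ℝ) :
    r ⬝ᵥ (X *ᵥ v) = (Xᵀ *ᵥ r) ⬝ᵥ v := by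
  rw [Matrix.dotProduct_mulVec, Matrix.mulVec_transpose]

theorem debias_lasso_large_fusion_error_case
    {n p : ℕ} (X : Matrix (Fin n) (Fin p) ℝ) (ytil : Fin n → ℝ)
    (lam2 : ℝ) (hlam2 : 0 < lam2)
    (β0 βbar δstar δhat : Fin p → ℝ)
    (hmin : ∀ δ : Fin p → ℝ,
      (1 / (2 * (n : ℝ))) * l2sq (ytil - X *ᵥ (βbar - δhat)) + lam2 * l1 δhat ≤
      (1 / (2 * (n : ℝ))) * l2sq (ytil - X *ᵥ (βbar - δ)) + lam2 * l1 δ)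
    (hE2 : linf ((n : ℝ)⁻¹ • (Xᵀ *ᵥ (ytil - X *ᵥ β0))) ≤ lam2 / 2)
    (hcase : lam2 * l1 δstar
        ≤ (βbar - (β0 + δstar)) ⬝ᵥ (((n : ℝ)⁻¹ • (Xᵀ * X)) *ᵥ (βbar - (β0 + δstar)))) :
    ((1 / 4) * ((δhat - δstar) ⬝ᵥ (((n : ℝ)⁻¹ • (Xᵀ * X)) *ᵥ (δhat - δstar)))
        ≤ 3 * ((βbar - (β0 + δstar)) ⬝ᵥ (((n : ℝ)⁻¹ • (Xᵀ * X)) *ᵥ (βbar - (β0 + δstar))))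
          - (lam2 / 2) * l1 (δhat - δstar)) ∧
    (l1 (δhat - δstar)
        ≤ (6 / lam2) *
          ((βbar - (β0 + δstar)) ⬝ᵥ (((n : ℝ)⁻¹ • (Xᵀ * X)) *ᵥ (βbar - (β0 + δstar))))) ∧
    ((1 / 4) * ((δhat - δstar) ⬝ᵥ (((n : ℝ)⁻¹ • (Xᵀ * X)) *ᵥ (δhat - δstar)))
        ≤ 3 * ((βbar - (β0 + δstar)) ⬝ᵥ (((n : ℝ)⁻¹ • (Xᵀ * X)) *ᵥ (βbar - (β0 + δstar))))) := by
  set c : ℝ := (n : ℝ)⁻¹ with hcdef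
  have hc : 0 ≤ c := by positivity
  set u : Fin p → ℝ := βbar - (β0 + δstar) with hu
  set v : Fin p → ℝ := δhat - δstar with hv
  set r : Fin n → ℝ := ytil - X *ᵥ β0 with hr
  -- rewrite quadratic forms
  rw [my_quad, my_quad] at *
  set z : Fin n → ℝ := X *ᵥ u with hz
  set y : Fin n → ℝ := X *ᵥ v with hy
  -- basic inequality at δstar
  have H := hmin δstar
  have e1 : ytil - X *ᵥ (βbar - δhat) = (r - z) + y := by
    rw [hr, hz, hy, hu, hv]
    simp only [Matrix.mulVec_sub, Matrix.mulVec_add]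
    abel
  have e2 : ytil - X *ᵥ (βbar - δstar) = r - z := by
    rw [hr, hz, hu]
    simp only [Matrix.mulVec_sub, Matrix.mulVec_add]
    abel
  rw [e1, e2, my_l2sq_add] at H
  have hsplit : (r - z) ⬝ᵥ y = (Xᵀ *ᵥ r) ⬝ᵥ v - z ⬝ᵥ y := by
    rw [sub_dotProduct, hy, my_dot_tr]
  rw [hsplit, my_l2sq_eq y] at H
  have hn : (1:ℝ) / (2 * (n:ℝ)) = 2⁻¹ * c := by
    rw [hcdef, one_div, mul_inv]
  rw [hn] at H
  set T : ℝ := (Xᵀ *ᵥ r) ⬝ᵥ v with hT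
  -- T bound from hE2
  have hTb : |c * T| ≤ (lam2 / 2) * l1 v := by
    have h1 : c * T = (c • (Xᵀ *ᵥ r)) ⬝ᵥ v := by
      rw [smul_dotProduct, smul_eq_mul]
    rw [h1]
    calc |(c • (Xᵀ *ᵥ r)) ⬝ᵥ v| ≤ linf (c • (Xᵀ *ᵥ r)) * l1 v := my_holder _ _
      _ ≤ (lam2 / 2) * l1 v :=
          mul_le_mul_of_nonneg_right hE2 (my_l1_nonneg v)
  have hT1 : -((lam2 / 2) * l1 v) ≤ c * T := (abs_le.mp hTb).1
  -- Cauchy-Schwarz scaled by c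
  have hCS : c * (z ⬝ᵥ y) ≤ c * (z ⬝ᵥ z + (1/4) * (y ⬝ᵥ y)) :=
    mul_le_mul_of_nonneg_left (my_cs z y) hc
  -- triangle: l1 v ≤ l1 δhat + l1 δstar
  have htri : l1 v ≤ l1 δhat + l1 δstar := by
    have := my_l1_rev v δhat
    have h2 : δhat - v = δstar := by rw [hv]; abel
    rw [h2] at this
    linarith [this, my_l1_nonneg (δhat - v)]
  have htri' : lam2 * l1 v ≤ lam2 * (l1 δhat + l1 δstar) :=
    mul_le_mul_of_nonneg_left htri hlam2.le
  have hQv0 : 0 ≤ c * (y ⬝ᵥ y) := mul_nonneg hc (my_dot_self_nonneg _)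
  have hl1v0 : 0 ≤ l1 v := my_l1_nonneg v
  have goal1 : (1/4) * (c * (y ⬝ᵥ y)) ≤ 3 * (c * (z ⬝ᵥ z)) - (lam2/2) * l1 v := by
    nlinarith [H, hT1, hCS, hcase, htri']
  have hp : 0 ≤ lam2 / 2 * l1 v := mul_nonneg (by linarith) hl1v0
  refine ⟨goal1, ?_, by linarith⟩
  rw [div_mul_eq_mul_div, le_div_iff₀ hlam2]
  linarith

end
end

section
/- Deterministic error bound for the debiasing step under a restricted-eigenvalue condition: Under the hypotheses of the debiasing-step basic inequality (δ̂ minimizes G(δ) = (1/(2n))‖ỹ − X(β̄ − δ)‖₂² + λ₂‖δ‖₁, v̂ = δ̂ − δ*, û = β̄ − (β^{(0)} + δ*), Σ̂ = X^⊤X/n, and ‖(1/n)X^⊤(ỹ − Xβ^{(0)})‖∞ ≤ λ₂/2), suppose additionally that there are κ > 0 and φ ≥ 0 with u^⊤ Σ̂ u ≥ κ‖u‖₂² − φ‖u‖₁² for all u ∈ ℝ^p, and that û^⊤ Σ̂ û ≤ λ₂‖δ*‖₁. Then κ ‖v̂‖₂² ≤ 12 λ₂ ‖δ*‖₁ + 36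 φ ‖δ*‖₁². -/
/-!
STATEMENT 9: Deterministic error bound for the debiasing step under a
restricted-eigenvalue condition.

Under the hypotheses of the debiasing-step basic inequality (minimizer `δhat`
of `G`, `v̂ = δhat − δstar`, `û = βbar − (β0 + δstar)`, `Σ̂ = XᵀX/n`, event
`E₂ : ‖(1/n)Xᵀ(ytil − Xβ0)‖∞ ≤ λ₂/2`), if moreover
`uᵀΣ̂u ≥ κ‖u‖₂² − φ‖u‖₁²` for all `u` (with `κ > 0`, `φ ≥ 0`) and
`ûᵀΣ̂û ≤ λ₂‖δ*‖₁`, then `κ‖v̂‖₂² ≤ 12λ₂‖δ*‖₁ + 36φ‖δ*‖₁²`.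
-/

open Matrix Finset

noncomputable section

lemma l1_sub_le {ι : Type*} [Fintype ι] (x y : ι → ℝ) : l1 (x - y) ≤ l1 x + l1 y := by
  rw [l1, l1, l1, ← Finset.sum_add_distrib]
  refine Finset.sum_le_sum fun j _ => ?_
  simpa [Pi.sub_apply, sub_eq_add_neg] using (abs_add_le (x j) (-(y j))).trans_eq (by rw [abs_neg])

lemma abs_dot_le {ι : Type*} [Fintype ι] (w v : ι → ℝ) : |w ⬝ᵥ v| ≤ linf w * l1 v := by
  rw [dotProduct, l1]
  calc |∑ j, w j * v j| ≤ ∑ j, |w j * v j| := Finset.abs_sum_le_sum_abs _ _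
    _ ≤ ∑ j, linf w * |v j| := by
        refine Finset.sum_le_sum fun j _ => ?_
        rw [abs_mul]
        exact mul_le_mul_of_nonneg_right
          (le_ciSup (f := fun j => |w j|) (Set.Finite.bddAbove (Set.finite_range _)) j) (abs_nonneg _)
    _ = linf w * ∑ j, |v j| := (Finset.mul_sum _ _ _).symm

lemma l2sq_add' {ι : Type*} [Fintype ι] (x y : ι → ℝ) :
    l2sq (x + y) = l2sq x + 2 * (x ⬝ᵥ y) + l2sq y := by
  simp only [l2sq, dotProduct, Pi.add_apply, Finset.mul_sum, ← Finset.sum_add_distrib]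
  exact Finset.sum_congr rfl fun j _ => by ring

lemma l2sq_eq_dot {ι : Type*} [Fintype ι] (v : ι → ℝ) : l2sq v = v ⬝ᵥ v := by
  simp [l2sq, dotProduct, sq]

lemma dot_sigma_eq {n p : ℕ} (X : Matrix (Fin n) (Fin p) ℝ) (u v : Fin p → ℝ) :
    u ⬝ᵥ (((n : ℝ)⁻¹ • (Xᵀ * X)) *ᵥ v) = (n : ℝ)⁻¹ * ((X *ᵥ u) ⬝ᵥ (X *ᵥ v)) := by
  rw [Matrix.smul_mulVec, dotProduct_smul, ← Matrix.mulVec_mulVec,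
    Matrix.dotProduct_mulVec, Matrix.vecMul_transpose, smul_eq_mul]

set_option maxHeartbeats 800000 in
theorem debias_lasso_l2_error_bound_RE
    {n p : ℕ} (X : Matrix (Fin n) (Fin p) ℝ) (ytil : Fin n → ℝ)
    (lam2 : ℝ) (hlam2 : 0 < lam2)
    (β0 βbar δstar δhat : Fin p → ℝ)
    (hmin : ∀ δ : Fin p → ℝ,
      (1 / (2 * (n : ℝ))) * l2sq (ytil - X *ᵥ (βbar - δhat)) + lam2 * l1 δhat ≤
      (1 / (2 * (n : ℝ))) * l2sq (ytil - X *ᵥ (βbar - δ)) + lam2 * l1 δ)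
    (hE2 : linf ((n : ℝ)⁻¹ • (Xᵀ *ᵥ (ytil - X *ᵥ β0))) ≤ lam2 / 2)
    (κ φ : ℝ) (hκ : 0 < κ) (hφ : 0 ≤ φ)
    (hRE : ∀ u : Fin p → ℝ,
      κ * l2sq u - φ * (l1 u) ^ 2 ≤ u ⬝ᵥ (((n : ℝ)⁻¹ • (Xᵀ * X)) *ᵥ u))
    (hcase : (βbar - (β0 + δstar)) ⬝ᵥ (((n : ℝ)⁻¹ • (Xᵀ * X)) *ᵥ (βbar - (β0 + δstar)))
        ≤ lam2 * l1 δstar) :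
    κ * l2sq (δhat - δstar) ≤ 12 * lam2 * l1 δstar + 36 * φ * (l1 δstar) ^ 2 := by
  set v : Fin p → ℝ := δhat - δstar with hv
  set u : Fin p → ℝ := βbar - (β0 + δstar) with hu
  set r : Fin n → ℝ := ytil - X *ᵥ β0 with hr
  set s : ℝ := l1 δstar with hs
  have hs0 : 0 ≤ s := l1_nonneg _
  -- vector identity
  have hvec : ytil - X *ᵥ (βbar - δhat) = (r - X *ᵥ u) + X *ᵥ v := by
    simp only [hr, hu, hv, Matrix.mulVec_sub, Matrix.mulVec_add]
    abel
  have hvec2 : ytil - X *ᵥ (βbar - δstar) = r - X *ᵥ u := by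
    simp only [hr, hu, Matrix.mulVec_sub, Matrix.mulVec_add]
    abel
  -- basic inequality
  have hbasic := hmin δstar
  rw [hvec, hvec2, l2sq_add'] at hbasic
  -- n⁻¹ relation
  have hninv : 2 * (1 / (2 * (n : ℝ))) = (n : ℝ)⁻¹ := by
    rcases Nat.eq_zero_or_pos n with h | h
    · simp [h]
    · have : (n : ℝ) ≠ 0 := Nat.cast_ne_zero.2 h.ne'
      field_simp
  -- quadratic forms
  set A : ℝ := v ⬝ᵥ (((n : ℝ)⁻¹ • (Xᵀ * X)) *ᵥ v) with hA
  set B : ℝ := u ⬝ᵥ (((n : ℝ)⁻¹ • (Xᵀ * X)) *ᵥ u) with hB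
  set C : ℝ := u ⬝ᵥ (((n : ℝ)⁻¹ • (Xᵀ * X)) *ᵥ v) with hC
  have hAd : A = (n : ℝ)⁻¹ * ((X *ᵥ v) ⬝ᵥ (X *ᵥ v)) := dot_sigma_eq X v v
  have hBd : B = (n : ℝ)⁻¹ * ((X *ᵥ u) ⬝ᵥ (X *ᵥ u)) := dot_sigma_eq X u u
  have hCd : C = (n : ℝ)⁻¹ * ((X *ᵥ u) ⬝ᵥ (X *ᵥ v)) := dot_sigma_eq X u v
  have hninv0 : (0:ℝ) ≤ (n : ℝ)⁻¹ := by positivity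
  have hA0 : 0 ≤ A := by
    rw [hAd, ← l2sq_eq_dot]; exact mul_nonneg hninv0 (l2sq_nonneg _)
  have hB0 : 0 ≤ B := by
    rw [hBd, ← l2sq_eq_dot]; exact mul_nonneg hninv0 (l2sq_nonneg _)
  -- the noise term
  set z : ℝ := ((n : ℝ)⁻¹ • (Xᵀ *ᵥ r)) ⬝ᵥ v with hz
  have hzabs : |z| ≤ lam2 / 2 * l1 v := by
    refine (abs_dot_le _ _).trans ?_
    exact mul_le_mul_of_nonneg_right hE2 (l1_nonneg _)
  -- rewrite basic inequality into scalar form: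
  -- A/2 - C + z + lam2 * l1 δhat ≤ lam2 * s
  have hzrw : z = (n : ℝ)⁻¹ * (r ⬝ᵥ (X *ᵥ v)) := by
    rw [hz, smul_dotProduct, smul_eq_mul, Matrix.mulVec_transpose,
      Matrix.dotProduct_mulVec]
  have hcross : (r - X *ᵥ u) ⬝ᵥ (X *ᵥ v) = r ⬝ᵥ (X *ᵥ v) - (X *ᵥ u) ⬝ᵥ (X *ᵥ v) := by
    rw [sub_dotProduct]
  have hkey : A / 2 - C + z + lam2 * l1 δhat ≤ lam2 * s := by
    have e1 : (1 / (2 * (n : ℝ))) * (2 * ((r - X *ᵥ u) ⬝ᵥ (X *ᵥ v)) + l2sq (X *ᵥ v))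
        = A / 2 - C + z := by
      rw [hcross, hAd, hCd, hzrw, l2sq_eq_dot]
      have h2 : (n : ℝ)⁻¹ = 2 * (1 / (2 * (n : ℝ))) := hninv.symm
      rw [h2]; ring
    linarith [hbasic, e1]
  -- Cauchy-Schwarz: C^2 ≤ A * B
  have hCS : C ^ 2 ≤ B * A := by
    have h := Finset.sum_mul_sq_le_sq_mul_sq Finset.univ (X *ᵥ u) (X *ᵥ v)
    rw [hCd, hAd, hBd, ← l2sq_eq_dot, ← l2sq_eq_dot]
    have hd : (X *ᵥ u) ⬝ᵥ (X *ᵥ v) = ∑ i, (X *ᵥ u) i * (X *ᵥ v) i := rfl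
    have hl2u : l2sq (X *ᵥ u) = ∑ i, ((X *ᵥ u) i) ^ 2 := rfl
    have hl2v : l2sq (X *ᵥ v) = ∑ i, ((X *ᵥ v) i) ^ 2 := rfl
    rw [hd, hl2u, hl2v, mul_pow]
    calc ((n:ℝ)⁻¹) ^ 2 * (∑ i, (X *ᵥ u) i * (X *ᵥ v) i) ^ 2
        ≤ ((n:ℝ)⁻¹) ^ 2 * ((∑ i, ((X *ᵥ u) i) ^ 2) * ∑ i, ((X *ᵥ v) i) ^ 2) := by
          exact mul_le_mul_of_nonneg_left h (by positivity)
      _ = (n:ℝ)⁻¹ * (∑ i, ((X *ᵥ u) i) ^ 2) * ((n:ℝ)⁻¹ * ∑ i, ((X *ᵥ v) i) ^ 2) := by ring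
  have hCle : C ≤ A / 4 + B := by
    nlinarith [sq_nonneg (C - (A / 4 + B)), sq_nonneg (A / 4 - B), hCS, hA0, hB0]
  -- l1 bounds
  have hl1v : l1 v ≤ s + l1 δhat := by
    have := l1_sub_le δhat δstar
    rw [← hv] at this; linarith [this]
  have hBs : B ≤ lam2 * s := hcase
  -- combine: A/4 + (lam2/2) * l1 δhat ≤ (5/2) lam2 s
  have hzge : -(lam2 / 2 * l1 v) ≤ z := neg_le_of_abs_le hzabs
  have hlv2 : lam2 / 2 * l1 v ≤ lam2 / 2 * (s + l1 δhat) :=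
    mul_le_mul_of_nonneg_left hl1v (by positivity)
  have hmain : A / 4 + lam2 / 2 * l1 δhat ≤ 5 / 2 * (lam2 * s) := by
    linarith [hkey, hCle, hzge, hBs, hlv2]
  have hdhat : l1 δhat ≤ 5 * s := by
    have h5 : lam2 / 2 * l1 δhat ≤ lam2 / 2 * (5 * s) := by linarith [hmain, hA0]
    exact le_of_mul_le_mul_left h5 (by positivity)
  have hl1v6 : l1 v ≤ 6 * s := by linarith [hl1v, hdhat]
  have hA10 : A ≤ 10 * (lam2 * s) := by
    have : 0 ≤ lam2 / 2 * l1 δhat := mul_nonneg (by positivity) (l1_nonneg δhat)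
    linarith [hmain]
  -- finish with RE
  have hREv := hRE v
  rw [← hA] at hREv
  have hl1v0 : 0 ≤ l1 v := l1_nonneg _
  have hsq : (l1 v) ^ 2 ≤ 36 * s ^ 2 := by nlinarith [hl1v6, hl1v0]
  have := mul_le_mul_of_nonneg_left hsq hφ
  linarith [hREv, hA10, mul_nonneg hlam2.le hs0, this]

end
end
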